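/- arXiv:2208.03783 — 4 statements merged into one kernel-verified Lean document; each statement's English description precedes it below -/
import Mathlib

section
/- Let p ≥ 5 be prime and g(p) = n₊(A₁⁽¹⁾)(p) over a field F of characteristic p. Then the center Z(g(p)) equals F·e_p if p ≢ 2 (mod 3), and equals F·e_{p-1} ⊕ F·e_p if p ≡ 2 (mod 3). -/
noncomputable section

/-- The structure constants: `aZ i j` is 1, 0, or -1 according as
`j - i` is congruent to 1, 0, or -1 modulo 3. -/
def aZ (i j : ℕ) : ℤ :=
  if ((j : ℤ) - (i : ℤ)) % 3 = 1 then 1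
  else if ((j : ℤ) - (i : ℤ)) % 3 = 0 then 0
  else -1

variable (F : Type*) [Field F] (p : ℕ)

/-- The structure constants viewed in the field `F`. -/
def aF (i j : ℕ) : F := ((aZ i j : ℤ) : F)

/-- The basis vector `e_k` (for `1 ≤ k ≤ p`) of the truncated algebra
`g(p) = n₊(A₁⁽¹⁾)(p)`, modelled on `Fin p → F`; `E k = 0` for `k` out of range. -/
def E (k : ℕ) : Fin p → F :=
  if h : 1 ≤ k ∧ k ≤ p then Pi.single (⟨k - 1, by omega⟩ : Fin p) 1 else 0

/-- The `k`-th coordinate (coefficient of `e_k`) of an element of `g(p)`. -/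
def coord (k : ℕ) (g : Fin p → F) : F :=
  if h : 1 ≤ k ∧ k ≤ p then g ⟨k - 1, by omega⟩ else 0

/-- The Lie bracket of `g(p)`: `[e_i, e_j] = a_{i,j} e_{i+j}`, interpreted as `0`
when `i + j > p`. -/
def br (f g : Fin p → F) : Fin p → F :=
  ∑ i : Fin p, ∑ j : Fin p,
    (f i * g j * aF F (i.1 + 1) (j.1 + 1)) • E F p (i.1 + 1 + (j.1 + 1))

/-! The coefficient of `e_{i+j}` in `[z, e_j]` is `a_{i,j} z_i`, so `z` is central iff `z_i = 0`
whenever `a_{i,j} ≠ 0` for some `j ≥ 1` with `i + j ≤ p`. For `i ≤ p - 2` both `j = 1` and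
`j = 2` are available, and `a_{i,1}`, `a_{i,2}` are never both zero; for `i = p - 1` only `j = 1`
is, and `a_{p-1,1} = 0` exactly when `p ≡ 2 (mod 3)`; `e_p` is always central. -/

variable {F p}

def IsCentral (z : Fin p → F) : Prop := ∀ g, br F p z g = 0

theorem aF_eq_zero_iff {i j : ℕ} : aF F i j = 0 ↔ ((j : ℤ) - i) % 3 = 0 := by
  unfold aF aZ
  split_ifs <;> simp [*]

theorem E_apply (k : ℕ) (m : Fin p) : E F p k m = if k = m.1 + 1 then 1 else 0 := by
  unfold E
  split_ifs <;> simp [Pi.single_apply, Fin.ext_iff] <;> omega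

theorem br_apply (z g : Fin p → F) (m : Fin p) :
    br F p z g m = ∑ i : Fin p, ∑ j : Fin p,
      z i * g j * aF F (i.1 + 1) (j.1 + 1) * if i.1 + 1 + (j.1 + 1) = m.1 + 1 then 1 else 0 := by
  simp only [br, Finset.sum_apply, Pi.smul_apply, smul_eq_mul, E_apply]

theorem isCentral_iff_forall_mul_aF_eq_zero (z : Fin p → F) :
    IsCentral z ↔
      ∀ i j : Fin p, i.1 + j.1 + 2 ≤ p → z i * aF F (i.1 + 1) (j.1 + 1) = 0 := by
  constructor
  · intro hz i j hij
    have h := congrFun (hz (Pi.single j 1)) ⟨i.1 + j.1 + 1, by omega⟩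
    rw [br_apply, Finset.sum_eq_single i, Finset.sum_eq_single j] at h
    · rwa [Pi.single_eq_same, mul_one, if_pos (by dsimp only; omega), mul_one, Pi.zero_apply] at h
    · intro b _ hb
      simp [Pi.single_eq_of_ne hb]
    · simp
    · intro b _ hb
      refine Finset.sum_eq_zero fun j' _ => ?_
      simp only [Pi.single_apply, ne_eq, Fin.ext_iff] at hb ⊢
      split_ifs <;> first | omega | simp
    · simp
  · intro h g
    funext m
    rw [br_apply]
    refine Finset.sum_eq_zero fun i _ => Finset.sum_eq_zero fun j _ => ?_
    split_ifs with hm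
    · rw [mul_one, mul_right_comm, h i j (by omega), zero_mul]
    · exact mul_zero _

def centralDegrees (p : ℕ) : Set ℕ := {k | k = p ∨ (k + 1 = p ∧ p % 3 = 2)}

theorem isCentral_iff (z : Fin p → F) :
    IsCentral z ↔ ∀ i : Fin p, z i ≠ 0 → i.1 + 1 ∈ centralDegrees p := by
  simp only [isCentral_iff_forall_mul_aF_eq_zero, mul_eq_zero, aF_eq_zero_iff, centralDegrees,
    Set.mem_ofPred_eq]
  constructor
  · intro h i hz
    have hi := i.2
    by_contra hdeg
    have h0 := (h i ⟨0, by omega⟩ (by dsimp only; omega)).resolve_left hz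
    by_cases hi3 : i.1 + 3 ≤ p
    · have h1 := (h i ⟨1, by omega⟩ (by dsimp only; omega)).resolve_left hz
      dsimp only at h0 h1
      omega
    · dsimp only at h0
      omega
  · intro h i j hij
    refine or_iff_not_imp_left.2 fun hz => ?_
    have := h i hz
    omega

theorem mem_span_image_E_iff (s : Set ℕ) (z : Fin p → F) :
    z ∈ Submodule.span F (E F p '' s) ↔ ∀ i : Fin p, z i ≠ 0 → i.1 + 1 ∈ s := by
  constructor
  · intro hz i
    contrapose!
    intro hi
    suffices Submodule.span F (E F p '' s) ≤ LinearMap.ker (LinearMap.proj i) from this hz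
    rw [Submodule.span_le]
    rintro _ ⟨k, hk, rfl⟩
    simp only [SetLike.mem_coe, LinearMap.mem_ker, LinearMap.proj_apply, E_apply]
    exact if_neg (by rintro rfl; exact hi hk)
  · intro hz
    rw [pi_eq_sum_univ' z]
    refine Submodule.sum_mem _ fun i _ => ?_
    by_cases hi : z i = 0
    · simp [hi]
    · refine Submodule.smul_mem _ _ (Submodule.subset_span ⟨i.1 + 1, hz i hi, ?_⟩)
      funext m
      simp [E_apply, Pi.single_apply, Fin.ext_iff, eq_comm]

theorem center_eq_span :
    {z : Fin p → F | IsCentral z} = Submodule.span F (E F p '' centralDegrees p) := by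
  ext z
  rw [Set.mem_ofPred_eq, isCentral_iff, SetLike.mem_coe, mem_span_image_E_iff]

theorem centralDegrees_of_mod_three_ne_two (h : p % 3 ≠ 2) : centralDegrees p = {p} := by
  ext k
  simp [centralDegrees, h]

theorem centralDegrees_of_mod_three_eq_two (h : p % 3 = 2) :
    centralDegrees p = {p - 1, p} := by
  ext k
  simp only [centralDegrees, h, Set.mem_ofPred_eq, Set.mem_insert_iff, Set.mem_singleton_iff,
    and_true]
  omega

theorem center_of_truncated_general (p : ℕ) (F : Type*) [Field F] :
    (p % 3 ≠ 2 →
      {z : Fin p → F | ∀ g, br F p z g = 0} = ↑(Submodule.span F {E F p p})) ∧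
    (p % 3 = 2 →
      {z : Fin p → F | ∀ g, br F p z g = 0}
        = ↑(Submodule.span F {E F p (p - 1), E F p p})) := by
  refine ⟨fun h => ?_, fun h => ?_⟩
  · rw [← Set.image_singleton, ← centralDegrees_of_mod_three_ne_two h]
    exact center_eq_span
  · rw [← Set.image_pair, ← centralDegrees_of_mod_three_eq_two h]
    exact center_eq_span

/-- The center of `g(p)` is `F·e_p` if `p ≢ 2 (mod 3)`, and `F·e_{p-1} ⊕ F·e_p`
if `p ≡ 2 (mod 3)`. -/
theorem center_of_truncated (p : ℕ) (hp : p.Prime) (h5 : 5 ≤ p)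
    (F : Type*) [Field F] [CharP F p] :
    (p % 3 ≠ 2 →
      {z : Fin p → F | ∀ g, br F p z g = 0} = ↑(Submodule.span F {E F p p})) ∧
    (p % 3 = 2 →
      {z : Fin p → F | ∀ g, br F p z g = 0}
        = ↑(Submodule.span F {E F p (p - 1), E F p p})) :=
  center_of_truncated_general p F
end
end

section
/- For g(p) = n₊(A₁⁽¹⁾)(p) with p ≥ 5 prime, the kernel of d¹: C¹ → C² has basis {e¹, e²}; consequently dim H¹(g(p), F) = 2. -/
/-!
Every `e_k` with `3 ≤ k ≤ p` is, up to a sign, a bracket: `[e₁, e_{k-1}] = [k-2]₃ e_k` and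
`[e₂, e_{k-2}] = [k-4]₃ e_k`, and `k - 2`, `k - 4` are not both divisible by 3. So a cochain
vanishing on brackets is a combination of `e¹, e²`. Conversely `e¹, e²` vanish on brackets,
since a bracket `[e_i, e_j]` has degree `i + j ≥ 2` and `[e₁, e₁] = 0`.
-/

noncomputable section

variable (F : Type*) [Field F] (p : ℕ)

/-- `s(k)`: `k/2 - 1` if `k` is even, `(k-1)/2` if `k` is odd. -/
def sdeg (k : ℕ) : ℕ := if k % 2 = 0 then k / 2 - 1 else (k - 1) / 2

/-- `M(p,k) = 1` if `k ≤ p + 1`, and `k - p` otherwise. -/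
def Mlow (p k : ℕ) : ℕ := if k ≤ p + 1 then 1 else k - p

/-- The 2-cochain `e^{i,j}`, the dual of `e_i ∧ e_j`, as a bilinear form. -/
def wedge (i j : ℕ) (g h : Fin p → F) : F :=
  coord F p i g * coord F p j h - coord F p j g * coord F p i h

/-- The 2-cochain `φ_k = Σ_{i = M(p,k)}^{s(k)} a_{i,k-i} e^{i,k-i}`. -/
def phiC (k : ℕ) (g h : Fin p → F) : F :=
  ∑ i ∈ Finset.Icc (Mlow p k) (sdeg k), aF F i (k - i) * wedge F p i (k - i) g h

/-- The Chevalley–Eilenberg differential `d²` with trivial coefficients. -/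
def d2 (φ : (Fin p → F) → (Fin p → F) → F) (g h f : Fin p → F) : F :=
  φ (br F p g h) f - φ (br F p g f) h + φ (br F p h f) g

/-- The space `C² = (Λ² g(p))*`, modelled as the span of the `e^{i,j}`. -/
def C2span : Submodule F ((Fin p → F) → (Fin p → F) → F) :=
  Submodule.span F {w | ∃ i j : ℕ, 1 ≤ i ∧ i < j ∧ j ≤ p ∧ w = wedge F p i j}

/-- The dual basis vector `e^k ∈ C¹ = g(p)*` (zero for `k` out of range). -/
def coordL (k : ℕ) : Module.Dual F (Fin p → F) :=
  if h : 1 ≤ k ∧ k ≤ p then LinearMap.proj (⟨k - 1, by omega⟩ : Fin p) else 0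

lemma E_eq_zero {k : ℕ} (hk : ¬(1 ≤ k ∧ k ≤ p)) : E F p k = 0 := dif_neg hk

lemma E_succ (a : Fin p) : E F p (a + 1) = Pi.single a 1 := by
  rw [E, dif_pos ⟨by omega, a.isLt⟩]
  rfl

lemma coordL_E {k : ℕ} (hk : 1 ≤ k ∧ k ≤ p) (m : ℕ) :
    coordL F p k (E F p m) = if m = k then 1 else 0 := by
  by_cases hm : 1 ≤ m ∧ m ≤ p
  · obtain ⟨a, rfl⟩ : ∃ a : Fin p, m = a + 1 := ⟨⟨m - 1, by omega⟩, by simp; omega⟩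
    simp only [coordL, dif_pos hk, E_succ, LinearMap.proj_apply, Pi.single_apply, Fin.ext_iff]
    congr 1
    simp only [eq_iff_iff]
    omega
  · rw [E_eq_zero F p hm, map_zero, if_neg (by omega)]

lemma br_single (a b : Fin p) :
    br F p (Pi.single a 1) (Pi.single b 1) = aF F (a + 1) (b + 1) • E F p (a + 1 + (b + 1)) := by
  simp [br, Pi.single_apply]

lemma br_E {i j : ℕ} (hi : 1 ≤ i ∧ i ≤ p) (hj : 1 ≤ j ∧ j ≤ p) :
    br F p (E F p i) (E F p j) = aF F i j • E F p (i + j) := by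
  obtain ⟨a, rfl⟩ : ∃ a : Fin p, i = a + 1 := ⟨⟨i - 1, by omega⟩, by simp; omega⟩
  obtain ⟨b, rfl⟩ : ∃ b : Fin p, j = b + 1 := ⟨⟨j - 1, by omega⟩, by simp; omega⟩
  rw [E_succ, E_succ, br_single]

lemma aF_ne_zero {i j : ℕ} (h : ((j : ℤ) - i) % 3 ≠ 0) : aF F i j ≠ 0 := by
  unfold aF aZ
  split_ifs <;> simp_all

lemma apply_E_add_eq_zero_of_br {ψ : Module.Dual F (Fin p → F)}
    (hψ : ∀ g h, ψ (br F p g h) = 0) {i j : ℕ} (hi : 1 ≤ i ∧ i ≤ p)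
    (hj : 1 ≤ j ∧ j ≤ p) (hij : ((j : ℤ) - i) % 3 ≠ 0) :
    ψ (E F p (i + j)) = 0 := by
  have := hψ (E F p i) (E F p j)
  rwa [br_E F p hi hj, map_smul, smul_eq_mul, mul_eq_zero, or_iff_right (aF_ne_zero F hij)] at this

lemma apply_E_eq_zero_of_br {ψ : Module.Dual F (Fin p → F)}
    (hψ : ∀ g h, ψ (br F p g h) = 0) {k : ℕ} (hk : 3 ≤ k ∧ k ≤ p) :
    ψ (E F p k) = 0 := by
  by_cases h2 : k % 3 = 2
  · simpa [show 2 + (k - 2) = k by omega] using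
      apply_E_add_eq_zero_of_br F p hψ (i := 2) (j := k - 2) (by omega) (by omega) (by omega)
  · simpa [show 1 + (k - 1) = k by omega] using
      apply_E_add_eq_zero_of_br F p hψ (i := 1) (j := k - 1) (by omega) (by omega) (by omega)

lemma coordL_br {k : ℕ} (hk : 1 ≤ k ∧ k ≤ 2) (g h : Fin p → F) :
    coordL F p k (br F p g h) = 0 := by
  by_cases hkp : k ≤ p
  · simp only [br, map_sum, map_smul, coordL_E F p ⟨hk.1, hkp⟩, smul_eq_mul]
    refine Finset.sum_eq_zero fun a _ => Finset.sum_eq_zero fun b _ => ?_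
    split_ifs with hab
    · obtain ⟨ha, hb⟩ : (a : ℕ) = 0 ∧ (b : ℕ) = 0 := by omega
      simp [ha, hb, aF, aZ]
    · exact mul_zero _
  · simp [coordL, hkp]

lemma dual_ext_E {φ ψ : Module.Dual F (Fin p → F)}
    (h : ∀ k, 1 ≤ k ∧ k ≤ p → φ (E F p k) = ψ (E F p k)) : φ = ψ :=
  (Pi.basisFun F (Fin p)).ext fun a => by
    simpa [E_succ] using h (a + 1) ⟨by omega, a.isLt⟩

lemma eq_smul_coordL_add_smul_coordL_of_br {ψ : Module.Dual F (Fin p → F)}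
    (hψ : ∀ g h, ψ (br F p g h) = 0) (hp : 2 ≤ p) :
    ψ = ψ (E F p 1) • coordL F p 1 + ψ (E F p 2) • coordL F p 2 := by
  refine dual_ext_E F p fun k hk => ?_
  simp only [LinearMap.add_apply, LinearMap.smul_apply, smul_eq_mul,
    coordL_E F p (k := 1) (by omega), coordL_E F p (k := 2) (by omega)]
  rcases (by omega : k = 1 ∨ k = 2 ∨ 3 ≤ k) with rfl | rfl | hk3
  · simp
  · simp
  · simp [apply_E_eq_zero_of_br F p hψ ⟨hk3, hk.2⟩, show k ≠ 1 by omega,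
      show k ≠ 2 by omega]

lemma linearIndependent_coordL (hp : 2 ≤ p) :
    LinearIndependent F ![coordL F p 1, coordL F p 2] := by
  refine LinearIndependent.pair_iff.2 fun s t hst => ⟨?_, ?_⟩
  · simpa [coordL_E F p (k := 1) (by omega), coordL_E F p (k := 2) (by omega)] using
      LinearMap.congr_fun hst (E F p 1)
  · simpa [coordL_E F p (k := 1) (by omega), coordL_E F p (k := 2) (by omega)] using
      LinearMap.congr_fun hst (E F p 2)

theorem ker_d1_general (p : ℕ) (h5 : 5 ≤ p)
    (F : Type*) [Field F] :
    ({ψ : Module.Dual F (Fin p → F) | ∀ g h, ψ (br F p g h) = 0}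
      = ↑(Submodule.span F {coordL F p 1, coordL F p 2})) ∧
    Module.finrank F ↥(Submodule.span F {coordL F p 1, coordL F p 2}) = 2 := by
  constructor
  · ext ψ
    simp only [Set.mem_ofPred_eq, SetLike.mem_coe, Submodule.mem_span_pair]
    refine ⟨fun hψ => ⟨_, _, (eq_smul_coordL_add_smul_coordL_of_br F p hψ (by omega)).symm⟩,
      ?_⟩
    rintro ⟨s, t, rfl⟩ g h
    simp [coordL_br F p (k := 1) (by omega), coordL_br F p (k := 2) (by omega)]
  · rw [← Matrix.range_cons_cons_empty _ _ ![],
      finrank_span_eq_card (linearIndependent_coordL F p (by omega))]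
    simp

/-- The kernel of `d¹ : C¹ → C²` is spanned by `e¹, e²`, and `dim H¹(g(p), F) = 2`. -/
theorem ker_d1 (p : ℕ) (hp : p.Prime) (h5 : 5 ≤ p)
    (F : Type*) [Field F] [CharP F p] :
    ({ψ : Module.Dual F (Fin p → F) | ∀ g h, ψ (br F p g h) = 0}
      = ↑(Submodule.span F {coordL F p 1, coordL F p 2})) ∧
    Module.finrank F ↥(Submodule.span F {coordL F p 1, coordL F p 2}) = 2 :=
  ker_d1_general p h5 F

end
end

section
/- For g(p) = n₊(A₁⁽¹⁾)(p) with p ≥ 5 prime, the 2-cochains e^{1,4} and e^{2,5} are 2-cocycles: d²(e^{1,4}) = 0 and d²(e^{2,5}) = 0. -/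
/-! The basis vectors e₁ and e₂ are not brackets (a₁,₁ = 0), so the coordinates e¹ and e² vanish
on [g, g], while [x, y]₄ = -e^{1,3}(x, y) and [x, y]₅ = e^{2,3}(x, y). By the Leibniz rule,
d e^{1,4} and d e^{2,5} are then multiples of e¹ ∧ e¹ ∧ e³ and e² ∧ e² ∧ e³, which vanish. -/

noncomputable section

variable (F : Type*) [Field F] (p : ℕ)

lemma coord_zero (g : Fin p → F) : coord F p 0 g = 0 := by
  simp [coord]

lemma coord_succ (g : Fin p → F) (i : Fin p) : coord F p (i.1 + 1) g = g i := by
  simp [coord]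

lemma mem_Icc_of_coord_ne_zero {k : ℕ} {g : Fin p → F} (hg : coord F p k g ≠ 0) :
    k ∈ Set.Icc 1 p := by
  by_contra hk
  exact hg (dif_neg hk)

lemma E_succ_apply (i : ℕ) (x : Fin p) : E F p (i + 1) x = if i = x.1 then 1 else 0 := by
  unfold E
  split_ifs <;> simp_all [Fin.ext_iff]

open Finset in
lemma coord_br_eq_sum_antidiagonal {k : ℕ} (hk : k ≤ p) (g h : Fin p → F) :
    coord F p k (br F p g h) =
      ∑ x ∈ antidiagonal k, coord F p x.1 g * coord F p x.2 h * aF F x.1 x.2 := by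
  cases k with
  | zero => simp [coord_zero]
  | succ n =>
  have hn : n < p := hk
  have hbr : coord F p (n + 1) (br F p g h) = ∑ ij : Fin p × Fin p,
      if ij.1.1 + 1 + ij.2.1 = n then g ij.1 * h ij.2 * aF F (ij.1.1 + 1) (ij.2.1 + 1) else 0 := by
    rw [show n + 1 = (⟨n, hn⟩ : Fin p).1 + 1 from rfl, coord_succ, Fintype.sum_prod_type]
    simp only [br, Finset.sum_apply, Pi.smul_apply, smul_eq_mul, ← add_assoc, E_succ_apply,
      mul_ite, mul_one, mul_zero]
  rw [hbr]
  refine sum_bij_ne_zero (fun ij _ _ => (ij.1.1 + 1, ij.2.1 + 1)) ?_ ?_ ?_ ?_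
  · intro ij _ hij
    rw [HasAntidiagonal.mem_antidiagonal]
    split_ifs at hij with hsum
    · omega
    · exact absurd rfl hij
  · intro a _ _ b _ _ hab
    simp only [Prod.mk.injEq, add_left_inj] at hab
    exact Prod.ext (Fin.ext hab.1) (Fin.ext hab.2)
  · rintro ⟨a, b⟩ hab hne
    obtain ⟨ha1, hap⟩ := mem_Icc_of_coord_ne_zero F p (left_ne_zero_of_mul (left_ne_zero_of_mul hne))
    obtain ⟨hb1, hbp⟩ := mem_Icc_of_coord_ne_zero F p (right_ne_zero_of_mul (left_ne_zero_of_mul hne))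
    obtain ⟨a, rfl⟩ : ∃ a', a = a' + 1 := ⟨a - 1, by omega⟩
    obtain ⟨b, rfl⟩ : ∃ b', b = b' + 1 := ⟨b - 1, by omega⟩
    rw [HasAntidiagonal.mem_antidiagonal] at hab
    refine ⟨(⟨a, by omega⟩, ⟨b, by omega⟩), mem_univ _, ?_, rfl⟩
    rwa [if_pos (by simp only; omega), ← coord_succ F p g, ← coord_succ F p h]
  · intro ij _ hij
    split_ifs at hij ⊢
    · simp only [coord_succ]
    · exact absurd rfl hij

lemma coord_one_br (hp : 1 ≤ p) (g h : Fin p → F) : coord F p 1 (br F p g h) = 0 := by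
  simp [coord_br_eq_sum_antidiagonal F p hp, Finset.Nat.sum_antidiagonal_succ, coord_zero]

lemma coord_two_br (hp : 2 ≤ p) (g h : Fin p → F) : coord F p 2 (br F p g h) = 0 := by
  simp [coord_br_eq_sum_antidiagonal F p hp, Finset.Nat.sum_antidiagonal_succ, coord_zero, aF, aZ]

lemma coord_four_br (hp : 4 ≤ p) (g h : Fin p → F) :
    coord F p 4 (br F p g h) = -wedge F p 1 3 g h := by
  simp only [coord_br_eq_sum_antidiagonal F p hp, Finset.Nat.sum_antidiagonal_succ,
    Finset.HasAntidiagonal.antidiagonal_zero, Finset.sum_singleton, coord_zero]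
  norm_num [aF, aZ, wedge]
  ring

lemma coord_five_br (hp : 5 ≤ p) (g h : Fin p → F) :
    coord F p 5 (br F p g h) = wedge F p 2 3 g h := by
  simp only [coord_br_eq_sum_antidiagonal F p hp, Finset.Nat.sum_antidiagonal_succ,
    Finset.HasAntidiagonal.antidiagonal_zero, Finset.sum_singleton, coord_zero]
  norm_num [aF, aZ, wedge]
  ring

lemma d2_wedge_eq_zero_of_coord_br {i j a : ℕ} (c : F)
    (hi : ∀ g h, coord F p i (br F p g h) = 0)
    (hj : ∀ g h, coord F p j (br F p g h) = c * wedge F p i a g h) (g h f : Fin p → F) :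
    d2 F p (wedge F p i j) g h f = 0 := by
  simp only [d2, wedge, hi, hj]
  ring

theorem e14_e25_are_cocycles_general (p : ℕ) (h5 : 5 ≤ p)
    (F : Type*) [Field F] :
    (∀ g h f : Fin p → F, d2 F p (wedge F p 1 4) g h f = 0) ∧
    (∀ g h f : Fin p → F, d2 F p (wedge F p 2 5) g h f = 0) := by
  constructor
  · refine d2_wedge_eq_zero_of_coord_br F p (a := 3) (-1) (coord_one_br F p (by omega)) ?_
    intro g h
    rw [coord_four_br F p (by omega), neg_one_mul]
  · refine d2_wedge_eq_zero_of_coord_br F p (a := 3) 1 (coord_two_br F p (by omega)) ?_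
    intro g h
    rw [coord_five_br F p h5, one_mul]

/-- The 2-cochains `e^{1,4}` and `e^{2,5}` are 2-cocycles. -/
theorem e14_e25_are_cocycles (p : ℕ) (hp : p.Prime) (h5 : 5 ≤ p)
    (F : Type*) [Field F] [CharP F p] :
    (∀ g h f : Fin p → F, d2 F p (wedge F p 1 4) g h f = 0) ∧
    (∀ g h f : Fin p → F, d2 F p (wedge F p 2 5) g h f = 0) :=
  e14_e25_are_cocycles_general p h5 F
end
end

section
/- Let p ≥ 5 be prime, F a field of characteristic p, and consider the restricted 2-cochain complex of g^λ(p) (p ≢ 2 mod 3) with λ ≠ 0. Then a pair (φ, ω) ∈ C²_* satisfies d²_*(φ, ω) = (0, 0) if and only if d²(φ) = 0, i.e., ind²(φ, ω) = 0 automatically for every ordinary 2-cocycle φ. -/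
noncomputable section

variable (F : Type*) [Field F] (p : ℕ)

/-- The `[p]`-operation of `g^λ(p)`: `g^{[p]} = (Σ α_i^p λ_i) e_p`. -/
def pOpL (lam : ℕ → F) (g : Fin p → F) : Fin p → F :=
  (∑ i ∈ Finset.Icc 1 p, (coord F p i g) ^ p * lam i) • E F p p

/-!
Write `B` for the alternating bilinear form `φ` and `e_k` for the basis vectors. Since `h^{[p]}`
is a multiple of `e_p`, it suffices that every 2-cocycle satisfies `B(e_m, e_p) = 0` for all `m`.
For `3 ≤ m < p` this is the cocycle identity at `(a, m - a, p)` with `a ∈ {1, 2}` chosen so that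
`a_{a,m-a} ≠ 0`: the other two brackets land beyond `e_p`. For `m = 1` two cocycle identities in
degree `p + 1` give `2 B(e_p, e_1) = 0`. For `m = 2`, the values `x_i = B(e_i, e_{p+2-i})` satisfy
`x_{i+1} = x_i`, except that `x_{i+1} = x_i + x_2` when `i ≡ 1 (mod 3)` (this uses
`p ≡ 1 (mod 3)`); hence
`-x_2 = x_p = ((p + 1) / 3) x_2`, and `(p + 1) / 3 + 1` is a unit because it lies strictly between
`0` and `p`.
-/

namespace GLambda

variable {F p}

section StructureConstants

variable (F)

lemma aZ_swap (i j : ℕ) : aZ j i = -aZ i j := by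
  unfold aZ; split_ifs <;> omega

lemma aF_swap (i j : ℕ) : aF F j i = -aF F i j := by
  rw [aF, aF, aZ_swap, Int.cast_neg]

lemma aF_congr {i j i' j' : ℕ} (h : (j + 2 * i) % 3 = (j' + 2 * i') % 3) :
    aF F i j = aF F i' j' := by
  have h' : ((j : ℤ) - i) % 3 = ((j' : ℤ) - i') % 3 := by omega
  simp [aF, aZ, h']

lemma aF_of_mod_eq_zero {i j : ℕ} (h : (j + 2 * i) % 3 = 0) : aF F i j = 0 := by
  have h' : ((j : ℤ) - i) % 3 = 0 := by omega
  simp [aF, aZ, h']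

lemma aF_of_mod_eq_one {i j : ℕ} (h : (j + 2 * i) % 3 = 1) : aF F i j = 1 := by
  have h' : ((j : ℤ) - i) % 3 = 1 := by omega
  simp [aF, aZ, h']

lemma aF_of_mod_eq_two {i j : ℕ} (h : (j + 2 * i) % 3 = 2) : aF F i j = -1 := by
  have h' : ((j : ℤ) - i) % 3 = 2 := by omega
  simp [aF, aZ, h']

lemma aF_ne_zero {i j : ℕ} (h : (j + 2 * i) % 3 ≠ 0) : aF F i j ≠ 0 := by
  rcases (by omega : (j + 2 * i) % 3 = 1 ∨ (j + 2 * i) % 3 = 2) with h | h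
  · simp [aF_of_mod_eq_one F h]
  · simp [aF_of_mod_eq_two F h]

end StructureConstants

lemma natCast_ne_zero_of_lt [CharP F p] {n : ℕ} (h0 : 0 < n) (h : n < p) : (n : F) ≠ 0 :=
  (CharP.cast_eq_zero_iff F p n).not.mpr (Nat.not_dvd_of_pos_of_lt h0 h)

lemma E_eq_zero_of_lt {k : ℕ} (hk : p < k) : E F p k = 0 := by
  simp [E, show ¬ k ≤ p by omega]

lemma E_of_le {k : ℕ} (h1 : 1 ≤ k) (hk : k ≤ p) :
    E F p k = Pi.single (⟨k - 1, by omega⟩ : Fin p) 1 := by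
  simp [E, h1, hk]

lemma E_succ (i : Fin p) : E F p (i + 1) = Pi.single i 1 := by
  rw [E_of_le (by omega) (by omega)]
  rfl

lemma br_E_E {a b : ℕ} (ha1 : 1 ≤ a) (ha : a ≤ p) (hb1 : 1 ≤ b) (hb : b ≤ p) :
    br F p (E F p a) (E F p b) = aF F a b • E F p (a + b) := by
  rw [br, Fintype.sum_eq_single ⟨a - 1, by omega⟩, Fintype.sum_eq_single ⟨b - 1, by omega⟩]
  · simp [E_of_le, *, Nat.sub_add_cancel]
  all_goals
    intro i hi
    simp [E_of_le, *]

lemma coord_add (k : ℕ) (g h : Fin p → F) :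
    coord F p k (g + h) = coord F p k g + coord F p k h := by
  unfold coord; split <;> simp

lemma coord_smul (k : ℕ) (c : F) (g : Fin p → F) :
    coord F p k (c • g) = c * coord F p k g := by
  unfold coord; split <;> simp

lemma exists_isAlt_of_mem_C2span {φ : (Fin p → F) → (Fin p → F) → F}
    (hφ : φ ∈ C2span F p) :
    ∃ B : LinearMap.BilinForm F (Fin p → F), B.IsAlt ∧ (fun g h => B g h) = φ := by
  induction hφ using Submodule.span_induction with
  | mem w hw =>
    obtain ⟨i, j, -, -, -, rfl⟩ := hw
    refine ⟨LinearMap.mk₂ F (wedge F p i j) ?_ ?_ ?_ ?_, fun g => ?_, rfl⟩ <;>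
      intros <;>
      simp only [LinearMap.mk₂_apply, wedge, coord_add, coord_smul, smul_eq_mul] <;> ring
  | zero => exact ⟨0, LinearMap.BilinForm.isAlt_zero, rfl⟩
  | add φ ψ _ _ hφ hψ =>
    obtain ⟨B, hB, rfl⟩ := hφ
    obtain ⟨C, hC, rfl⟩ := hψ
    exact ⟨B + C, hB.add hC, rfl⟩
  | smul c φ _ hφ =>
    obtain ⟨B, hB, rfl⟩ := hφ
    exact ⟨c • B, hB.smul c, rfl⟩

variable {B : LinearMap.BilinForm F (Fin p → F)}

lemma apply_eq_zero_of_apply_E {x : Fin p → F}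
    (h : ∀ m, 1 ≤ m → m ≤ p → B (E F p m) x = 0) (g : Fin p → F) : B g x = 0 := by
  have hx : B.flip x = 0 := (Pi.basisFun F (Fin p)).ext fun i => by
    simpa [← E_succ] using h (i + 1) (by omega) (by omega)
  simpa using LinearMap.congr_fun hx g

section Cocycle

variable (hB : B.IsAlt) (hco : ∀ g h f, d2 F p (fun g h => B g h) g h f = 0)
include hco

lemma cocycle_E_E_E {a b c : ℕ} (ha1 : 1 ≤ a) (ha : a ≤ p) (hb1 : 1 ≤ b) (hb : b ≤ p)
    (hc1 : 1 ≤ c) (hc : c ≤ p) :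
    aF F a b * B (E F p (a + b)) (E F p c) - aF F a c * B (E F p (a + c)) (E F p b)
      + aF F b c * B (E F p (b + c)) (E F p a) = 0 := by
  simpa [d2, br_E_E, *] using hco (E F p a) (E F p b) (E F p c)

lemma apply_E_add_eq_zero {a b c : ℕ} (ha1 : 1 ≤ a) (hb1 : 1 ≤ b) (hab : a + b ≤ p)
    (hc1 : 1 ≤ c) (hc : c ≤ p) (hac : p < a + c) (hbc : p < b + c) (haF : aF F a b ≠ 0) :
    B (E F p (a + b)) (E F p c) = 0 := by
  have h := cocycle_E_E_E hco ha1 (by omega) hb1 (by omega) hc1 hc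
  simpa [E_eq_zero_of_lt, hac, hbc, haF] using h

lemma apply_E_E_p_of_three_le {m : ℕ} (hm3 : 3 ≤ m) (hm : m < p) :
    B (E F p m) (E F p p) = 0 := by
  obtain ⟨a, ha1, ha2, haF⟩ : ∃ a, 1 ≤ a ∧ a ≤ 2 ∧ (m - a + 2 * a) % 3 ≠ 0 := by
    by_cases h : m % 3 = 2
    · exact ⟨2, by omega, le_rfl, by omega⟩
    · exact ⟨1, le_rfl, by omega, by omega⟩
  have h := apply_E_add_eq_zero hco ha1 (b := m - a) (c := p) (by omega) (by omega) (by omega)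
    le_rfl (by omega) (by omega) (aF_ne_zero F haF)
  rwa [Nat.add_sub_cancel' (by omega)] at h

include hB

lemma apply_E_one_E_p (hp : p % 3 = 1) (h7 : 7 ≤ p) (h2 : (2 : F) ≠ 0) :
    B (E F p 1) (E F p p) = 0 := by
  have r1 := cocycle_E_E_E hco (a := 1) (b := 3) (c := p - 3) le_rfl (by omega) (by omega)
    (by omega) (by omega) (by omega)
  have r2 := cocycle_E_E_E hco (a := 1) (b := 4) (c := p - 4) le_rfl (by omega) (by omega)
    (by omega) (by omega) (by omega)
  rw [show 3 + (p - 3) = p by omega] at r1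
  rw [show 4 + (p - 4) = p by omega, show 1 + (p - 4) = p - 3 by omega] at r2
  simp (disch := omega) only [aF_of_mod_eq_zero, aF_of_mod_eq_one, aF_of_mod_eq_two,
    Nat.reduceAdd] at r1 r2
  have key : (2 : F) * B (E F p 1) (E F p p) = 0 := by
    linear_combination r2 - r1 + hB.neg_eq (E F p 4) (E F p (p - 3))
      - 2 * hB.neg_eq (E F p 1) (E F p p)
  simpa [h2] using key

lemma apply_E_succ_of_mod_ne_one (hp : p % 3 = 1) {i j : ℕ} (hij : i + j = p + 1) (hi : 2 ≤ i)
    (hj : 1 ≤ j) (hi3 : i % 3 ≠ 1) :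
    B (E F p (i + 1)) (E F p j) = B (E F p i) (E F p (j + 1)) := by
  have r := cocycle_E_E_E hco (a := 1) (b := i) (c := j) le_rfl (by omega) (by omega)
    (by omega) hj (by omega)
  have hneg : aF F 1 j = -aF F 1 i := by
    rw [aF_congr F (i := 1) (j := j) (i' := i) (j' := 1) (by omega), aF_swap]
  rw [hij, E_eq_zero_of_lt (k := p + 1) (by omega), map_zero, LinearMap.zero_apply, hneg,
    add_comm 1 i, add_comm 1 j] at r
  have key : aF F 1 i * (B (E F p (i + 1)) (E F p j) - B (E F p i) (E F p (j + 1))) = 0 := by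
    linear_combination r + aF F 1 i * hB.neg_eq (E F p i) (E F p (j + 1))
  simpa [sub_eq_zero, aF_ne_zero F (show (i + 2 * 1) % 3 ≠ 0 by omega)] using key

lemma apply_E_succ_of_mod_eq_one (hp : p % 3 = 1) {i j : ℕ} (hij : i + j = p + 1) (hi : 2 ≤ i)
    (hj : 1 ≤ j) (hi3 : i % 3 = 1) :
    B (E F p (i + 1)) (E F p j) = B (E F p i) (E F p (j + 1)) + B (E F p 2) (E F p p) := by
  obtain ⟨k, rfl⟩ : ∃ k, i = k + 1 := ⟨i - 1, by omega⟩
  have r := cocycle_E_E_E hco (a := 2) (b := k) (c := j) (by omega) (by omega) (by omega)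
    (by omega) hj (by omega)
  rw [show k + j = p by omega, show 2 + k = k + 1 + 1 by omega, add_comm 2 j] at r
  simp (disch := omega) only [aF_of_mod_eq_one, aF_of_mod_eq_two] at r
  have step := apply_E_succ_of_mod_ne_one hB hco hp (i := k) (j := j + 1) (by omega) (by omega)
    (by omega) (by omega)
  rw [show j + 1 + 1 = j + 2 by omega] at step
  linear_combination r + hB.neg_eq (E F p k) (E F p (j + 2))
    + hB.neg_eq (E F p 2) (E F p p) - step

lemma apply_E_E_eq_mul (hp : p % 3 = 1) {i j : ℕ} (hij : i + j = p + 2) (hi : 2 ≤ i)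
    (hj : 2 ≤ j) :
    B (E F p i) (E F p j) = ((i + 1) / 3 : ℕ) * B (E F p 2) (E F p p) := by
  induction i, hi using Nat.le_induction generalizing j with
  | base =>
    obtain rfl : j = p := by omega
    simp
  | succ i hi ih =>
    by_cases hi3 : i % 3 = 1
    · rw [apply_E_succ_of_mod_eq_one hB hco hp (by omega) hi (by omega) hi3,
        ih (by omega) (by omega), show (i + 1 + 1) / 3 = (i + 1) / 3 + 1 by omega]
      push_cast
      ring
    · rw [apply_E_succ_of_mod_ne_one hB hco hp (by omega) hi (by omega) hi3,
        ih (by omega) (by omega), show (i + 1 + 1) / 3 = (i + 1) / 3 by omega]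

lemma apply_E_two_E_p [CharP F p] (hp : p % 3 = 1) (h7 : 7 ≤ p) :
    B (E F p 2) (E F p p) = 0 := by
  have h := apply_E_E_eq_mul hB hco hp (i := p) (j := 2) rfl (by omega) le_rfl
  have key : (((p + 1) / 3 + 1 : ℕ) : F) * B (E F p 2) (E F p p) = 0 := by
    push_cast
    linear_combination -h - hB.neg_eq (E F p 2) (E F p p)
  exact (mul_eq_zero.mp key).resolve_left (natCast_ne_zero_of_lt (by omega) (by omega))

lemma apply_E_E_p [CharP F p] (hp : p % 3 = 1) (h7 : 7 ≤ p) {m : ℕ} (hm1 : 1 ≤ m)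
    (hm : m ≤ p) : B (E F p m) (E F p p) = 0 := by
  rcases (by omega : m = 1 ∨ m = 2 ∨ 3 ≤ m ∧ m < p ∨ m = p) with rfl | rfl | ⟨hm3, hmp⟩ | rfl
  · have h2 : (2 : F) ≠ 0 := by
      exact_mod_cast natCast_ne_zero_of_lt (p := p) two_pos (by omega)
    exact apply_E_one_E_p hB hco hp h7 h2
  · exact apply_E_two_E_p hB hco hp h7
  · exact apply_E_E_p_of_three_le hco hm3 hmp
  · exact hB.self_eq_zero _

end Cocycle

end GLambda

theorem restricted_d2_iff_ordinary_general (p : ℕ) (hp : p.Prime) (h5 : 5 ≤ p)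
    (h3 : p % 3 ≠ 2) (F : Type*) [Field F] [CharP F p] (lam : ℕ → F) :
    ∀ φ ∈ C2span F p,
      ((∀ g h f, d2 F p φ g h f = 0) ∧ ∀ g h, φ g (pOpL F p lam h) = 0)
        ↔ (∀ g h f, d2 F p φ g h f = 0) := by
  intro φ hφ
  obtain ⟨B, hB, rfl⟩ := GLambda.exists_isAlt_of_mem_C2span hφ
  refine ⟨And.left, fun hco => ⟨hco, fun g h => ?_⟩⟩
  have hp1 : p % 3 = 1 := by
    have h3p : ¬ 3 ∣ p := fun h => by
      have := (Nat.prime_dvd_prime_iff_eq Nat.prime_three hp).mp h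
      omega
    omega
  dsimp only [pOpL]
  rw [map_smul, GLambda.apply_eq_zero_of_apply_E
    (fun m hm1 hm => GLambda.apply_E_E_p hB hco hp1 (by omega) hm1 hm) g, smul_zero]

/-- For `p ≢ 2 (mod 3)` and `λ ≠ 0`, a pair `(φ, ω) ∈ C²_*` is a restricted
2-cocycle iff `d²(φ) = 0`: the map `ind²(φ,ω)(g,h) = φ(g ∧ h^{[p]})` vanishes
automatically for every ordinary 2-cocycle `φ`. -/
theorem restricted_d2_iff_ordinary (p : ℕ) (hp : p.Prime) (h5 : 5 ≤ p)
    (h3 : p % 3 ≠ 2) (F : Type*) [Field F] [CharP F p] (lam : ℕ → F)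
    (hlam : ∃ i, 1 ≤ i ∧ i ≤ p ∧ lam i ≠ 0) :
    ∀ φ ∈ C2span F p,
      ((∀ g h f, d2 F p φ g h f = 0) ∧ ∀ g h, φ g (pOpL F p lam h) = 0)
        ↔ (∀ g h f, d2 F p φ g h f = 0) :=
  restricted_d2_iff_ordinary_general p hp h5 h3 F lam
end
end
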